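/- Termination bound for the line search step size: Under the setting of the sufficient decrease property — V, W finite-dimensional real inner product spaces, f : V × W → ℝ with u ↦ f(u, w) continuously differentiable, g : V → ℝ convex lower semicontinuous, S ⊆ V nonempty closed convex, h : V → ℝ continuously differentiable and γ-strongly convex (γ > 0), w ∈ W fixed, R > 0 with u ↦ R·h(u) − f(u, w) convex, x ∈ S, and x⁺ ∈ S the minimizer over S of z ↦ g(z) + ⟪∇₁f(x, w), z − x⟫ + (1/α)·D_h(z, x) — if η > 0 and 0 < α ≤ γ/(2η + γR), then (f(x, w) + g(x)) − (f(x⁺, w) + g(x⁺)) ≥ η·‖x⁺ − x‖². -/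

import Mathlib

open scoped RealInnerProductSpace

/-!
Taking `z = x` in the minimality of `x⁺` gives
`g x⁺ + ⟪∇f x, x⁺ - x⟫ + D_h(x⁺, x) / α ≤ g x`. Since the Bregman divergence is linear in `h`
(at points of differentiability) and nonnegative for convex `h`, convexity of `R h - f` gives
`D_f ≤ R D_h` and convexity of `h - (γ/2)‖·‖²` gives `D_h(x⁺, x) ≥ (γ/2)‖x⁺ - x‖²`. Hence the
objective decreases by at least `(1/α - R) D_h(x⁺, x) ≥ (1/α - R) (γ/2) ‖x⁺ - x‖²`, and the
step-size bound is exactly `(1/α - R) (γ/2) ≥ η`.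
-/

theorem ConvexOn.add_fderiv_sub_le {E : Type*} [NormedAddCommGroup E] [NormedSpace ℝ E]
    {s : Set E} {φ : E → ℝ} (hφ : ConvexOn ℝ s φ) {x y : E} (hx : x ∈ s) (hy : y ∈ s)
    {L : E →L[ℝ] ℝ} (hL : HasFDerivAt φ L x) :
    φ x + L (y - x) ≤ φ y := by
  set ℓ : ℝ →ᵃ[ℝ] E := AffineMap.lineMap x y
  have hline : ConvexOn ℝ (ℓ ⁻¹' s) (φ ∘ ℓ) := hφ.comp_affineMap ℓ
  have hderiv : HasDerivAt (φ ∘ ℓ) (L (y - x)) 0 :=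
    HasFDerivAt.comp_hasDerivAt (x := (0 : ℝ)) (by simpa [ℓ] using hL)
      AffineMap.hasDerivAt_lineMap
  have hslope := hline.le_slope_of_hasDerivAt (x := 0) (y := 1) (by simpa [ℓ] using hx)
    (by simpa [ℓ] using hy) one_pos hderiv
  simp only [slope, ℓ, Function.comp_apply, AffineMap.lineMap_apply_zero,
    AffineMap.lineMap_apply_one, sub_zero, inv_one, one_smul, vsub_eq_sub] at hslope
  linarith

section Bregman

variable {V : Type*} [NormedAddCommGroup V] [InnerProductSpace ℝ V] [CompleteSpace V]

noncomputable def bregmanDiv (h : V → ℝ) (z x : V) : ℝ :=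
  h z - h x - ⟪gradient h x, z - x⟫

theorem bregmanDiv_eq_fderiv (h : V → ℝ) (z x : V) :
    bregmanDiv h z x = h z - h x - fderiv ℝ h x (z - x) := by
  rw [bregmanDiv, inner_gradient_left]

theorem bregmanDiv_sub {φ ψ : V → ℝ} {x : V} (hφ : DifferentiableAt ℝ φ x)
    (hψ : DifferentiableAt ℝ ψ x) (z : V) :
    bregmanDiv (fun u => φ u - ψ u) z x = bregmanDiv φ z x - bregmanDiv ψ z x := by
  simp only [bregmanDiv_eq_fderiv, fderiv_fun_sub hφ hψ, sub_apply]
  ring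

theorem bregmanDiv_const_mul {φ : V → ℝ} {x : V} (hφ : DifferentiableAt ℝ φ x) (c : ℝ) (z : V) :
    bregmanDiv (fun u => c * φ u) z x = c * bregmanDiv φ z x := by
  simp only [bregmanDiv_eq_fderiv, fderiv_const_mul hφ, smul_apply, smul_eq_mul]
  ring

theorem bregmanDiv_norm_sq (z x : V) : bregmanDiv (fun u => ‖u‖ ^ 2) z x = ‖z - x‖ ^ 2 := by
  simp only [bregmanDiv_eq_fderiv, fderiv_norm_sq_apply, smul_apply,
    innerSL_apply_apply, nsmul_eq_mul, Nat.cast_ofNat, norm_sub_sq_real, inner_sub_right,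
    real_inner_self_eq_norm_sq, real_inner_comm x z]
  ring

theorem ConvexOn.bregmanDiv_nonneg {s : Set V} {φ : V → ℝ} (hφ : ConvexOn ℝ s φ) {x z : V}
    (hx : x ∈ s) (hz : z ∈ s) (hd : DifferentiableAt ℝ φ x) : 0 ≤ bregmanDiv φ z x := by
  have := hφ.add_fderiv_sub_le hx hz hd.hasFDerivAt
  rw [bregmanDiv_eq_fderiv]
  linarith

theorem half_mul_norm_sub_sq_le_bregmanDiv {s : Set V} {h : V → ℝ} {γ : ℝ}
    (hsc : ConvexOn ℝ s (fun u => h u - γ / 2 * ‖u‖ ^ 2)) {x z : V} (hx : x ∈ s) (hz : z ∈ s)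
    (hd : DifferentiableAt ℝ h x) : γ / 2 * ‖z - x‖ ^ 2 ≤ bregmanDiv h z x := by
  have hsq : DifferentiableAt ℝ (fun u : V => ‖u‖ ^ 2) x :=
    (contDiff_norm_sq ℝ).contDiffAt.differentiableAt one_ne_zero
  have := hsc.bregmanDiv_nonneg hx hz (hd.sub (hsq.const_mul _))
  rwa [bregmanDiv_sub hd (hsq.const_mul _), bregmanDiv_const_mul hsq, bregmanDiv_norm_sq,
    sub_nonneg] at this

theorem bregmanDiv_le_mul_of_convexOn_sub {s : Set V} {f h : V → ℝ} {R : ℝ}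
    (hrel : ConvexOn ℝ s (fun u => R * h u - f u)) {x z : V} (hx : x ∈ s) (hz : z ∈ s)
    (hf : DifferentiableAt ℝ f x) (hh : DifferentiableAt ℝ h x) :
    bregmanDiv f z x ≤ R * bregmanDiv h z x := by
  have := hrel.bregmanDiv_nonneg hx hz ((hh.const_mul R).sub hf)
  rwa [bregmanDiv_sub (hh.const_mul R) hf, bregmanDiv_const_mul hh, sub_nonneg] at this

end Bregman

theorem stmt3_general {V W : Type*} [NormedAddCommGroup V] [InnerProductSpace ℝ V]
    [FiniteDimensional ℝ V]
    (f : V × W → ℝ) (hf : ∀ w : W, ContDiff ℝ 1 (fun u : V => f (u, w)))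
    (g : V → ℝ)
    (S : Set V)
    (h : V → ℝ) (hh : ContDiff ℝ 1 h)
    (γ : ℝ) (hγ : 0 < γ)
    (hh_sc : ConvexOn ℝ Set.univ (fun x => h x - γ / 2 * ‖x‖ ^ 2))
    (w : W) (R : ℝ) (hR : 0 < R)
    (hrel : ConvexOn ℝ Set.univ (fun u : V => R * h u - f (u, w)))
    (x : V) (hx : x ∈ S) (α : ℝ)
    (xp : V)
    (hmin : ∀ z ∈ S,
      g xp + ⟪gradient (fun u : V => f (u, w)) x, xp - x⟫ +
          (1 / α) * (h xp - h x - ⟪gradient h x, xp - x⟫)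
        ≤ g z + ⟪gradient (fun u : V => f (u, w)) x, z - x⟫ +
          (1 / α) * (h z - h x - ⟪gradient h x, z - x⟫))
    (η : ℝ) (hη : 0 < η) (hα0 : 0 < α) (hαle : α ≤ γ / (2 * η + γ * R)) :
    (f (x, w) + g x) - (f (xp, w) + g xp) ≥ η * ‖xp - x‖ ^ 2 := by
  have hfx : DifferentiableAt ℝ (fun u : V => f (u, w)) x := (hf w).differentiable one_ne_zero x
  have hhx : DifferentiableAt ℝ h x := hh.differentiable one_ne_zero x
  have hstep := hmin x hx
  simp only [sub_self, inner_zero_right, add_zero, mul_zero] at hstep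
  have hsmooth := bregmanDiv_le_mul_of_convexOn_sub hrel (Set.mem_univ x) (Set.mem_univ xp) hfx hhx
  have hstrong := half_mul_norm_sub_sq_le_bregmanDiv hh_sc (Set.mem_univ x) (Set.mem_univ xp) hhx
  have hcoef : η ≤ (1 / α - R) * (γ / 2) := by
    rw [le_div_iff₀ (by positivity)] at hαle
    rw [sub_mul, one_div_mul_eq_div, le_sub_iff_add_le, le_div_iff₀ hα0]
    linarith
  have hcoef_nonneg : 0 ≤ 1 / α - R := (pos_of_mul_pos_left (hη.trans_le hcoef) (by positivity)).le
  calc (f (x, w) + g x) - (f (xp, w) + g xp) ≥ (1 / α - R) * bregmanDiv h xp x := by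
        simp only [bregmanDiv] at hsmooth ⊢
        linarith
    _ ≥ (1 / α - R) * (γ / 2) * ‖xp - x‖ ^ 2 := by
        rw [mul_assoc]
        gcongr
    _ ≥ η * ‖xp - x‖ ^ 2 := by gcongr

/-- Termination bound for the line search step size: if `0 < α ≤ γ/(2η + γR)` then the
Bregman proximal step decreases the objective by at least `η·‖x⁺ − x‖²`. -/
theorem stmt3 {V W : Type*} [NormedAddCommGroup V] [InnerProductSpace ℝ V]
    [FiniteDimensional ℝ V] [NormedAddCommGroup W] [InnerProductSpace ℝ W]
    [FiniteDimensional ℝ W]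
    (f : V × W → ℝ) (hf : ∀ w : W, ContDiff ℝ 1 (fun u : V => f (u, w)))
    (g : V → ℝ) (hg_conv : ConvexOn ℝ Set.univ g) (hg_lsc : LowerSemicontinuous g)
    (S : Set V) (hS_ne : S.Nonempty) (hS_closed : IsClosed S) (hS_conv : Convex ℝ S)
    (h : V → ℝ) (hh : ContDiff ℝ 1 h)
    (γ : ℝ) (hγ : 0 < γ)
    (hh_sc : ConvexOn ℝ Set.univ (fun x => h x - γ / 2 * ‖x‖ ^ 2))
    (w : W) (R : ℝ) (hR : 0 < R)
    (hrel : ConvexOn ℝ Set.univ (fun u : V => R * h u - f (u, w)))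
    (x : V) (hx : x ∈ S) (α : ℝ)
    (xp : V) (hxp : xp ∈ S)
    (hmin : ∀ z ∈ S,
      g xp + ⟪gradient (fun u : V => f (u, w)) x, xp - x⟫ +
          (1 / α) * (h xp - h x - ⟪gradient h x, xp - x⟫)
        ≤ g z + ⟪gradient (fun u : V => f (u, w)) x, z - x⟫ +
          (1 / α) * (h z - h x - ⟪gradient h x, z - x⟫))
    (η : ℝ) (hη : 0 < η) (hα0 : 0 < α) (hαle : α ≤ γ / (2 * η + γ * R)) :
    (f (x, w) + g x) - (f (xp, w) + g xp) ≥ η * ‖xp - x‖ ^ 2 :=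
  stmt3_general f hf g S h hh γ hγ hh_sc w R hR hrel x hx α xp hmin η hη hα0 hαle
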